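/- For every real r ≥ 1, the function f(x) = h_x^{(r)}/x^{r̄} − h_x^{(r+1)}/x^{\overline{r+1}} is strictly decreasing on (0, ∞); that is, for all 0 < x < y one has f(y) < f(x). -/

import Mathlib

open MeasureTheory Filter Topology

/-- The digamma function `ψ(x) = Γ'(x)/Γ(x)`. -/
noncomputable def digamma (x : ℝ) : ℝ := deriv Real.Gamma x / Real.Gamma x

/-- The rising factorial `x^{r̄} = Γ(x+r)/Γ(x)`. -/
noncomputable def rise (x r : ℝ) : ℝ := Real.Gamma (x + r) / Real.Gamma x

/-- The analytic extension of the hyperharmonic numbers: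
`h_x^{(r)} = (x^{r̄}/(x Γ(r)))(ψ(x+r) − ψ(r))` for `r > 0`, and `h_x^{(0)} = 1/x`. -/
noncomputable def hyp (r x : ℝ) : ℝ :=
  if r = 0 then 1 / x
  else rise x r / (x * Real.Gamma r) * (digamma (x + r) - digamma r)

/-- `y_n(r) = ∑_{k=1}^n h_k^{(r)}/k^r − ∫_1^n h_x^{(r)}/x^r dx`. -/
noncomputable def yseq (r : ℝ) (n : ℕ) : ℝ :=
  ∑ k ∈ Finset.Icc 1 n, hyp r k / (k : ℝ) ^ r - ∫ x in (1:ℝ)..(n:ℝ), hyp r x / x ^ r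

/-- `z_n(r) = ∑_{k=1}^{n-1} h_k^{(r)}/k^r − ∫_1^n h_x^{(r)}/x^r dx`. -/
noncomputable def zseq (r : ℝ) (n : ℕ) : ℝ :=
  ∑ k ∈ Finset.Icc 1 (n - 1), hyp r k / (k : ℝ) ^ r - ∫ x in (1:ℝ)..(n:ℝ), hyp r x / x ^ r

/-- `b_n(r) = ∑_{k=1}^n h_k^{(r)}/k^{r̄} − ∫_1^n h_x^{(r)}/x^{r̄} dx`. -/
noncomputable def bseq (r : ℝ) (n : ℕ) : ℝ :=
  ∑ k ∈ Finset.Icc 1 n, hyp r k / rise k r - ∫ x in (1:ℝ)..(n:ℝ), hyp r x / rise x r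

/-- `a_n(r) = ∑_{k=1}^{n-1} h_k^{(r)}/k^{r̄} − ∫_1^n h_x^{(r)}/x^{r̄} dx`. -/
noncomputable def aseq (r : ℝ) (n : ℕ) : ℝ :=
  ∑ k ∈ Finset.Icc 1 (n - 1), hyp r k / rise k r - ∫ x in (1:ℝ)..(n:ℝ), hyp r x / rise x r

/-!
Write `S(x) = (ψ(x + r) - ψ(r)) / x`. The recurrences `ψ(z + 1) = ψ(z) + 1/z` and
`Γ(r + 1) = r Γ(r)` give `Γ(r) f(x) = (1 - 1/r) S(x) + 1 / (r² (x + r))`. The last term is strictly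
decreasing, and for `r ≥ 1` the coefficient `1 - 1/r` is nonnegative, so it suffices that `S` is
antitone. Telescoping the recurrence gives `S(x) = ∑ₙ 1 / ((r + n) (x + r + n))`, where the tail
`ψ(v + N) - ψ(u + N)` tends to `0` because `ψ`, the derivative of the convex function `log Γ`, is
monotone.
-/

open Real

lemma differentiableAt_Gamma_of_pos {x : ℝ} (hx : 0 < x) : DifferentiableAt ℝ Gamma x :=
  differentiableOn_Gamma_Ioi.differentiableAt (Ioi_mem_nhds hx)

lemma digamma_add_one {x : ℝ} (hx : 0 < x) : digamma (x + 1) = digamma x + 1 / x := by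
  have hGamma : (fun y => Gamma (y + 1)) =ᶠ[𝓝 x] fun y => y * Gamma y := by
    filter_upwards [eventually_gt_nhds hx] with y hy using Gamma_add_one hy.ne'
  have hderiv : deriv Gamma (x + 1) = Gamma x + x * deriv Gamma x := by
    rw [← deriv_comp_add_const, hGamma.deriv_eq,
      deriv_fun_mul differentiableAt_fun_id (differentiableAt_Gamma_of_pos hx), deriv_id'', one_mul]
  have hGx : Gamma x ≠ 0 := (Gamma_pos_of_pos hx).ne'
  rw [digamma, digamma, hderiv, Gamma_add_one hx.ne']
  field_simp
  ring

lemma digamma_add_nat {x : ℝ} (hx : 0 < x) (N : ℕ) :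
    digamma (x + N) = digamma x + ∑ n ∈ Finset.range N, 1 / (x + n) := by
  induction N with
  | zero => simp
  | succ N ih =>
    rw [Nat.cast_succ, ← add_assoc, digamma_add_one (by positivity), ih, Finset.sum_range_succ,
      add_assoc]

lemma digamma_add_nat_sub_digamma_le {x : ℝ} (hx : 0 < x) (N : ℕ) :
    digamma (x + N) - digamma x ≤ N / x := by
  have hterm (n : ℕ) : 1 / (x + n) ≤ 1 / x :=
    one_div_le_one_div_of_le hx (le_add_of_nonneg_right n.cast_nonneg)
  calc digamma (x + N) - digamma x = ∑ n ∈ Finset.range N, 1 / (x + n) := by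
        rw [digamma_add_nat hx]; ring
    _ ≤ ∑ n ∈ Finset.range N, 1 / x := Finset.sum_le_sum fun n _ => hterm n
    _ = N / x := by simp [div_eq_mul_inv]

lemma digamma_le_digamma {x y : ℝ} (hx : 0 < x) (hxy : x ≤ y) : digamma x ≤ digamma y := by
  have hderiv {z : ℝ} (hz : 0 < z) : HasDerivAt (log ∘ Gamma) (digamma z) z :=
    (differentiableAt_Gamma_of_pos hz).hasDerivAt.log (Gamma_pos_of_pos hz).ne'
  have hy := hx.trans_le hxy
  simpa only [(hderiv hx).deriv, (hderiv hy).deriv] using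
    convexOn_log_Gamma.monotoneOn_deriv (fun z hz => (hderiv hz).differentiableAt) hx hy hxy

lemma tendsto_digamma_add_nat_sub_digamma_add_nat {u v : ℝ} (hu : 0 < u) (huv : u ≤ v) :
    Tendsto (fun N : ℕ => digamma (v + N) - digamma (u + N)) atTop (𝓝 0) := by
  have hv := hu.trans_le huv
  obtain ⟨k, hk⟩ := exists_nat_ge (v - u)
  have hlower (N : ℕ) : 0 ≤ digamma (v + N) - digamma (u + N) :=
    sub_nonneg.mpr (digamma_le_digamma (by positivity) (by linarith))
  have hupper (N : ℕ) : digamma (v + N) - digamma (u + N) ≤ k / (u + N) := by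
    calc digamma (v + N) - digamma (u + N) ≤ digamma (u + N + k) - digamma (u + N) := by
          gcongr; exact digamma_le_digamma (by positivity) (by linarith)
      _ ≤ k / (u + N) := digamma_add_nat_sub_digamma_le (by positivity) k
  refine squeeze_zero hlower hupper (tendsto_const_nhds.div_atTop ?_)
  exact tendsto_atTop_add_const_left _ u tendsto_natCast_atTop_atTop

lemma hasSum_one_div_add_nat_sub_one_div_add_nat {u v : ℝ} (hu : 0 < u) (huv : u ≤ v) :
    HasSum (fun n : ℕ => 1 / (u + n) - 1 / (v + n)) (digamma v - digamma u) := by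
  have hnonneg (n : ℕ) : 0 ≤ 1 / (u + n) - 1 / (v + n) :=
    sub_nonneg.mpr (one_div_le_one_div_of_le (by positivity) (by linarith))
  have hpartial (N : ℕ) : ∑ n ∈ Finset.range N, (1 / (u + n) - 1 / (v + n)) =
      (digamma v - digamma u) - (digamma (v + N) - digamma (u + N)) := by
    rw [Finset.sum_sub_distrib, digamma_add_nat hu, digamma_add_nat (hu.trans_le huv)]
    ring
  rw [hasSum_iff_tendsto_nat_of_nonneg hnonneg, funext hpartial]
  simpa using
    tendsto_const_nhds.sub (tendsto_digamma_add_nat_sub_digamma_add_nat hu huv)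

lemma hasSum_digamma_slope {r x : ℝ} (hr : 0 < r) (hx : 0 < x) :
    HasSum (fun n : ℕ => 1 / ((r + n) * (x + r + n))) ((digamma (x + r) - digamma r) / x) := by
  refine ((hasSum_one_div_add_nat_sub_one_div_add_nat hr (by linarith)).div_const x).congr_fun ?_
  intro n
  have : 0 < r + n := by positivity
  have : 0 < x + r + n := by positivity
  field_simp
  ring

lemma digamma_slope_antitoneOn {r : ℝ} (hr : 0 < r) :
    AntitoneOn (fun x => (digamma (x + r) - digamma r) / x) (Set.Ioi 0) := by
  intro x (hx : 0 < x) y (hy : 0 < y) hxy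
  refine hasSum_le (fun n => ?_) (hasSum_digamma_slope hr hy) (hasSum_digamma_slope hr hx)
  have : 0 < r + n := by positivity
  have : 0 < x + r + n := by positivity
  gcongr

lemma hyp_div_rise {r x : ℝ} (hr : 0 < r) (hx : 0 < x) :
    hyp r x / rise x r = (digamma (x + r) - digamma r) / x / Gamma r := by
  have hrise : rise x r ≠ 0 :=
    div_ne_zero (Gamma_pos_of_pos (by linarith)).ne' (Gamma_pos_of_pos hx).ne'
  rw [hyp, if_neg hr.ne']
  field_simp

lemma hyp_div_rise_sub_hyp_add_one_div_rise {r x : ℝ} (hr : 0 < r) (hx : 0 < x) :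
    hyp r x / rise x r - hyp (r + 1) x / rise x (r + 1) =
      ((1 - 1 / r) * ((digamma (x + r) - digamma r) / x) + 1 / (r ^ 2 * (x + r))) / Gamma r := by
  have hxr : 0 < x + r := by linarith
  rw [hyp_div_rise hr hx, hyp_div_rise (by linarith) hx, ← add_assoc, digamma_add_one hxr,
    digamma_add_one hr, Gamma_add_one hr.ne']
  field_simp
  ring

theorem f_strictAnti (r : ℝ) (hr : 1 ≤ r) :
    ∀ x y : ℝ, 0 < x → x < y →
      hyp r y / rise y r - hyp (r + 1) y / rise y (r + 1) <
        hyp r x / rise x r - hyp (r + 1) x / rise x (r + 1) := by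
  intro x y hx hxy
  have hr₀ : 0 < r := by linarith
  have hy : 0 < y := hx.trans hxy
  rw [hyp_div_rise_sub_hyp_add_one_div_rise hr₀ hx, hyp_div_rise_sub_hyp_add_one_div_rise hr₀ hy]
  have hcoef : 0 ≤ 1 - 1 / r := sub_nonneg.mpr ((div_le_one hr₀).mpr hr)
  have hslope := digamma_slope_antitoneOn hr₀ hx hy hxy.le
  have hpole : 1 / (r ^ 2 * (y + r)) < 1 / (r ^ 2 * (x + r)) := by gcongr
  gcongr ?_ / _
  exact add_lt_add_of_le_of_lt (mul_le_mul_of_nonneg_left hslope hcoef) hpole
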